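/- arXiv:2505.03680 — 6 statements merged into one kernel-verified Lean document; each statement's English description precedes it below -/
import Mathlib

section
/- There exists an instance of the Location-Restricted Stable Matching problem (with 4 students, 2 locations of 2 students each, and 2 projects of capacity 2) that admits a feasible matching but admits no feasible matching with zero blocking pairs. -/
open Finset
open scoped Classical

/-- A feasible matching of an LRSM instance: every project `p` receives exactly
`cap p` students and students at the same project are collocated. -/
def Feasible {S P L : Type*} [Fintype S] (loc : S → L) (cap : P → ℕ) (M : S → P) : Prop :=
  (∀ p, (Finset.univ.filter fun s => M s = p).card = cap p) ∧
  ∀ s t, M s = M t → loc s = loc t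

/-- A blocking pair: student `s` prefers project `p` to its match and `p` prefers `s`
to one of its matched students (lower rank = more preferred). -/
def BlockingPair {S P : Type*} (sRank : S → P → ℕ) (pRank : P → S → ℕ)
    (M : S → P) (s : S) (p : P) : Prop :=
  sRank s p < sRank s (M s) ∧ ∃ t, M t = p ∧ pRank p s < pRank p t

/-!
A project is filled by two collocated students, so a feasible matching sends one location to
each project: it is `s ↦ c + loc s` for some `c : Fin 2`. If location `0` gets project `0`,
student `0` and project `1` (which ranks `0` above its student `3`) block; otherwise student `2`
and project `1` (which ranks `2` above its student `1`) block.
-/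

namespace LRSMCounterexample

def loc : Fin 4 → Fin 2 := ![0, 0, 1, 1]

def studentRank : Fin 4 → Fin 2 → ℕ := ![![1, 0], ![0, 1], ![1, 0], ![0, 1]]

def projectRank : Fin 2 → Fin 4 → ℕ := ![![0, 1, 2, 3], ![0, 2, 1, 3]]

theorem card_filter_loc_eq (l : Fin 2) : (univ.filter fun s => loc s = l).card = 2 := by
  fin_cases l <;> decide

theorem studentRank_injective (s : Fin 4) : Function.Injective (studentRank s) := by
  revert s; decide

theorem projectRank_injective (p : Fin 2) : Function.Injective (projectRank p) := by
  revert p; decide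

-- `convert` bridges the classical `DecidablePred` used inside `Feasible` and `Fin`'s `DecidableEq`.
theorem feasible_loc : Feasible loc (fun _ : Fin 2 => 2) loc :=
  ⟨fun l => by convert card_filter_loc_eq l, fun _ _ h => h⟩

theorem eq_add_loc_of_feasible {M : Fin 4 → Fin 2} (hM : Feasible loc (fun _ : Fin 2 => 2) M)
    (s : Fin 4) : M s = M 0 + loc s := by
  have hcol : ∀ s t, loc s ≠ loc t → M s ≠ M t := fun s t h hM' => h (hM.2 s t hM')
  have hfin2 : ∀ a b : Fin 2, a ≠ b → b = a + 1 := by decide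
  have h2 : M 2 = M 0 + 1 := hfin2 _ _ (hcol 0 2 (by decide))
  fin_cases s
  · simp [loc]
  · simpa [loc] using (hfin2 _ _ (hcol 1 2 (by decide))).symm.trans h2
  · simpa [loc] using h2
  · simpa [loc] using hfin2 _ _ (hcol 0 3 (by decide))

theorem exists_blockingPair_add_loc (c : Fin 2) :
    ∃ s p, BlockingPair studentRank projectRank (fun s => c + loc s) s p := by
  fin_cases c
  · exact ⟨0, 1, by decide, 3, by decide, by decide⟩
  · exact ⟨2, 1, by decide, 1, by decide, by decide⟩

end LRSMCounterexample

open LRSMCounterexample in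
/-- There is an LRSM instance with 4 students, 2 locations of 2 students each, and
2 projects of capacity 2, with strict preferences, which admits a feasible matching
but no feasible matching is stable (every feasible matching has a blocking pair). -/
theorem stmt0 :
    ∃ (loc : Fin 4 → Fin 2) (sRank : Fin 4 → Fin 2 → ℕ) (pRank : Fin 2 → Fin 4 → ℕ),
      (∀ l : Fin 2, (Finset.univ.filter fun s => loc s = l).card = 2) ∧
      (∀ s, Function.Injective (sRank s)) ∧
      (∀ p, Function.Injective (pRank p)) ∧
      (∃ M, Feasible loc (fun _ : Fin 2 => 2) M) ∧
      (∀ M, Feasible loc (fun _ : Fin 2 => 2) M →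
        ∃ s p, BlockingPair sRank pRank M s p) := by
  refine ⟨loc, studentRank, projectRank, card_filter_loc_eq, studentRank_injective,
    projectRank_injective, ⟨loc, feasible_loc⟩, fun M hM => ?_⟩
  have hM_eq : M = fun s => M 0 + loc s := funext (eq_add_loc_of_feasible hM)
  rw [hM_eq]
  exact exists_blockingPair_add_loc (M 0)
end

section
/- For every LRSM instance that admits a feasible matching, there exists an l-stable matching: a feasible matching with no blocking pair (s, p) where s is collocated with the students matched to p. Moreover such a matching can be obtained by taking a feasible matching M, partitioning agents by location under M, and computing a stable matching within each location's induced admissions subproblem. -/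
open Finset
open scoped Classical

/-!
Students at different locations never share a project, so the locations do not interact.
Starting from a feasible matching `M₀`, solve at each location the admissions problem whose
capacities are the occupancies of `M₀` there, by student-proposing deferred acceptance (ties in
the students' ranks broken by an enumeration of the projects). The union of these stable
matchings has the occupancy of `M₀` at every location, hence is feasible, and a collocated
blocking pair would block the stable matching of its location.
-/

namespace DeferredAcceptance

variable {S P : Type*}

/-- `R` holds the pairs `(s, p)` in which `p` has already rejected `s`. -/
def Proposes (r : S → P → ℕ) (R : Finset (S × P)) (s : S) (p : P) : Prop :=
  (s, p) ∉ R ∧ ∀ p', (s, p') ∉ R → r s p ≤ r s p'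

variable {r : S → P → ℕ} {q : P → S → ℕ} {cap : P → ℕ} {R : Finset (S × P)} {s : S} {p : P}

lemma Proposes.unique (hr : Function.Injective (r s)) {p' : P} (h : Proposes r R s p)
    (h' : Proposes r R s p') : p = p' :=
  hr (le_antisymm (h.2 p' h'.1) (h'.2 p h.1))

lemma Proposes.insert_of_ne {x : S × P} (h : Proposes r R s p) (hx : x ≠ (s, p)) :
    Proposes r (insert x R) s p :=
  ⟨by simp [hx.symm, h.1], fun p' hp' => h.2 p' fun h' => hp' (mem_insert_of_mem h')⟩

variable [Fintype S]

noncomputable def proposers (r : S → P → ℕ) (R : Finset (S × P)) (p : P) : Finset S :=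
  {s | Proposes r R s p}

def Justified (r : S → P → ℕ) (q : P → S → ℕ) (cap : P → ℕ) (R : Finset (S × P)) : Prop :=
  ∀ s p, (s, p) ∈ R → cap p ≤ #{u ∈ proposers r R p | q p u ≤ q p s}

lemma mem_proposers : s ∈ proposers r R p ↔ Proposes r R s p := by
  simp [proposers]

variable [Fintype P]

omit [Fintype S] in
lemma exists_proposes (h : ∃ p, (s, p) ∉ R) : ∃ p, Proposes r R s p := by
  obtain ⟨p, hp⟩ := h
  obtain ⟨p₀, hp₀, hmin⟩ := exists_min_image {p | (s, p) ∉ R} (r s) ⟨p, by simpa using hp⟩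
  exact ⟨p₀, (mem_filter.1 hp₀).2, fun p' hp' => hmin p' (by simpa using hp')⟩

lemma sum_card_proposers (hr : ∀ s, Function.Injective (r s)) :
    ∑ p, #(proposers r R p) = #{s | ∃ p, Proposes r R s p} := by
  rw [← card_biUnion]
  · congr 1
    ext s
    simp [mem_proposers]
  · intro p _ p' _ hne
    exact disjoint_left.2 fun s hs hs' =>
      hne ((mem_proposers.1 hs).unique (hr s) (mem_proposers.1 hs'))

/-- A student rejected by every project would leave `cap p` proposers to every `p` among the
other students, which is too many. -/
lemma Justified.forall_exists_proposes (hr : ∀ s, Function.Injective (r s))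
    (hcap : ∑ p, cap p = Fintype.card S) (hJ : Justified r q cap R) (s : S) :
    ∃ p, Proposes r R s p := by
  by_contra hs
  have hR : ∀ p, (s, p) ∈ R := fun p => by
    by_contra h
    exact hs (exists_proposes ⟨p, h⟩)
  have := calc
    ∑ p, cap p ≤ ∑ p, #(proposers r R p) :=
      sum_le_sum fun p _ => (hJ s p (hR p)).trans (card_le_card (filter_subset _ _))
    _ = #{s | ∃ p, Proposes r R s p} := sum_card_proposers hr
    _ < Fintype.card S := card_lt_univ_of_notMem (by simpa using hs)
  omega

omit [Fintype P] in
lemma Justified.insert_worst (hr : ∀ s, Function.Injective (r s)) (hJ : Justified r q cap R)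
    {w : S} (hover : cap p < #(proposers r R p)) (hw : w ∈ proposers r R p)
    (hworst : ∀ u ∈ proposers r R p, q p u ≤ q p w) :
    Justified r q cap (insert (w, p) R) := by
  intro s p' hs
  set B := {u ∈ proposers r R p' | q p' u ≤ q p' s}
  have hB : B.erase w ⊆ {u ∈ proposers r (insert (w, p) R) p' | q p' u ≤ q p' s} := by
    intro u hu
    obtain ⟨huw, hu⟩ := mem_erase.1 hu
    obtain ⟨hu, hus⟩ := mem_filter.1 hu
    exact mem_filter.2 ⟨mem_proposers.2 ((mem_proposers.1 hu).insert_of_ne fun h => huw (Prod.mk.inj h).1.symm), hus⟩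
  have hall : p' = p → q p w ≤ q p s → cap p' ≤ #(B.erase w) := by
    rintro rfl hws
    rw [show B = proposers r R p' from filter_true_of_mem fun u hu => (hworst u hu).trans hws,
      card_erase_of_mem hw]
    omega
  refine le_trans ?_ (card_le_card hB)
  rcases mem_insert.1 hs with hs | hs
  · obtain ⟨rfl, rfl⟩ := Prod.mk.inj hs
    exact hall rfl le_rfl
  · by_cases hwB : w ∈ B
    · obtain ⟨hwp', hws⟩ := mem_filter.1 hwB
      obtain rfl := (mem_proposers.1 hwp').unique (hr w) (mem_proposers.1 hw)
      exact hall rfl hws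
    · rw [erase_eq_of_notMem hwB]
      exact hJ s p' hs

lemma Justified.exists_stable_of_le (hr : ∀ s, Function.Injective (r s))
    (hcap : ∑ p, cap p = Fintype.card S) (hJ : Justified r q cap R)
    (hle : ∀ p, #(proposers r R p) ≤ cap p) :
    ∃ M : S → P, (∀ p, #{s | M s = p} = cap p) ∧ ∀ s p, ¬ BlockingPair r q M s p := by
  choose M hM using hJ.forall_exists_proposes hr hcap
  have hfiber : ∀ p, ({s | M s = p} : Finset S) = proposers r R p := fun p => by
    ext s
    simp only [mem_proposers, mem_filter, mem_univ, true_and]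
    exact ⟨fun h => h ▸ hM s, fun h => (hM s).unique (hr s) h⟩
  have hocc : ∀ p, #(proposers r R p) = cap p := by
    refine fun p => (sum_eq_sum_iff_of_le fun p _ => hle p).1 ?_ p (mem_univ p)
    rw [hcap, sum_card_proposers hr, filter_true_of_mem fun s _ => ⟨M s, hM s⟩, card_univ]
  refine ⟨M, fun p => by rw [hfiber, hocc], ?_⟩
  rintro s p ⟨hlt, t, rfl, hts⟩
  have hR : (s, M t) ∈ R := by
    by_contra h
    exact hlt.not_ge ((hM s).2 _ h)
  have hfull : {u ∈ proposers r R (M t) | q (M t) u ≤ q (M t) s} = proposers r R (M t) :=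
    eq_of_subset_of_card_le (filter_subset _ _) ((hocc _).trans_le (hJ s _ hR))
  have ht : t ∈ proposers r R (M t) := mem_proposers.2 (hM t)
  rw [← hfull] at ht
  exact hts.not_ge (mem_filter.1 ht).2

/-- Deferred acceptance: while some project is over-subscribed, it rejects its least preferred
proposer. -/
theorem Justified.exists_stable {R : Finset (S × P)} (hr : ∀ s, Function.Injective (r s))
    (hcap : ∑ p, cap p = Fintype.card S) (hJ : Justified r q cap R) :
    ∃ M : S → P, (∀ p, #{s | M s = p} = cap p) ∧ ∀ s p, ¬ BlockingPair r q M s p := by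
  by_cases hover : ∃ p, cap p < #(proposers r R p)
  · obtain ⟨p, hp⟩ := hover
    obtain ⟨w, hw, hworst⟩ := exists_max_image (proposers r R p) (q p) (card_pos.1 (by omega))
    have hwR : (w, p) ∉ R := (mem_proposers.1 hw).1
    exact Justified.exists_stable hr hcap (hJ.insert_worst hr hp hw hworst)
  · push Not at hover
    exact hJ.exists_stable_of_le hr hcap hover
termination_by #Rᶜ
decreasing_by
  rw [compl_insert]
  exact card_erase_lt_of_mem (mem_compl.2 hwR)

end DeferredAcceptance

theorem exists_stable_of_injective {S P : Type*} [Fintype S] [Fintype P] {r : S → P → ℕ}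
    (q : P → S → ℕ) {cap : P → ℕ} (hr : ∀ s, Function.Injective (r s))
    (hcap : ∑ p, cap p = Fintype.card S) :
    ∃ M : S → P, (∀ p, #{s | M s = p} = cap p) ∧ ∀ s p, ¬ BlockingPair r q M s p :=
  DeferredAcceptance.Justified.exists_stable (R := ∅) hr hcap fun _ _ h => absurd h (notMem_empty _)

/-- Ties are broken by the position in an enumeration of `X`. -/
lemma exists_injective_strictMono_refinement {X : Type*} [Fintype X] (f : X → ℕ) :
    ∃ g : X → ℕ, Function.Injective g ∧ ∀ a b, f a < f b → g a < g b := by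
  set n := Fintype.card X
  set e := Fintype.equivFin X
  have hlt : ∀ a b, f a < f b → f a * n + e a < f b * n + e b := fun a b h =>
    calc f a * n + e a < (f a + 1) * n := by rw [add_one_mul]; have := (e a).isLt; omega
      _ ≤ f b * n := Nat.mul_le_mul_right n h
      _ ≤ f b * n + e b := Nat.le_add_right _ _
  refine ⟨fun a => f a * n + e a, fun a b hab => ?_, hlt⟩
  obtain hf | hf | hf := lt_trichotomy (f a) (f b)
  · exact absurd hab (hlt a b hf).ne
  · simp only [hf, add_right_inj] at hab
    exact e.injective (Fin.ext hab)
  · exact absurd hab (hlt b a hf).ne'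

lemma BlockingPair.of_refinement {S P : Type*} {r r' : S → P → ℕ} {q : P → S → ℕ} {M : S → P}
    {s : S} {p : P} (hr' : ∀ s p p', r s p < r s p' → r' s p < r' s p')
    (h : BlockingPair r q M s p) : BlockingPair r' q M s p :=
  ⟨hr' s _ _ h.1, h.2⟩

theorem exists_stable_of_sum_cap_eq {S P : Type*} [Fintype S] [Fintype P] (r : S → P → ℕ)
    (q : P → S → ℕ) {cap : P → ℕ} (hcap : ∑ p, cap p = Fintype.card S) :
    ∃ M : S → P, (∀ p, #{s | M s = p} = cap p) ∧ ∀ s p, ¬ BlockingPair r q M s p := by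
  choose r' hr' hrr' using fun s => exists_injective_strictMono_refinement (r s)
  obtain ⟨M, hM, hstable⟩ := exists_stable_of_injective q hr' hcap
  exact ⟨M, hM, fun s p h => hstable s p (h.of_refinement hrr')⟩

/-- Only the finitely many projects in the range of `M₀` matter. -/
theorem exists_stable_of_occupancy {S P : Type*} [Fintype S] (r : S → P → ℕ) (q : P → S → ℕ)
    (M₀ : S → P) :
    ∃ M : S → P, (∀ p, #{s | M s = p} = #{s | M₀ s = p}) ∧ ∀ s p, ¬ BlockingPair r q M s p := by
  have hcap : ∑ p : Set.range M₀, #{s | M₀ s = p} = Fintype.card S := by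
    rw [← card_univ, card_eq_sum_card_fiberwise fun s _ => mem_univ (Set.rangeFactorization M₀ s)]
    simp only [Subtype.ext_iff, Set.rangeFactorization_coe]
  obtain ⟨M, hM, hstable⟩ :=
    exists_stable_of_sum_cap_eq (fun s (p : Set.range M₀) => r s p) (fun p s => q p s) hcap
  refine ⟨fun s => M s, fun p => ?_, ?_⟩
  · by_cases hp : p ∈ Set.range M₀
    · simpa only [Subtype.ext_iff] using hM ⟨p, hp⟩
    · have hM₀ : ∀ s, M₀ s ≠ p := fun s h => hp ⟨s, h⟩
      have hM' : ∀ s, (M s : P) ≠ p := fun s h => hp (h ▸ (M s).2)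
      simp [hM₀, hM']
  · rintro s _ ⟨hlt, t, rfl, hts⟩
    exact hstable s (M t) ⟨hlt, t, rfl, hts⟩

section Locations

variable {S P L : Type*} [Fintype S] (loc : S → L)

lemma card_filter_subtype_loc (ℓ : L) (Q : S → Prop) :
    #{t : {s // loc s = ℓ} | Q t} = #{s ∈ ({s | Q s} : Finset S) | loc s = ℓ} := by
  rw [← card_subtype (loc · = ℓ)]
  congr 1
  ext t
  simp

lemma card_fiber_eq_of_forall_loc {f g : S → P}
    (h : ∀ ℓ p, #{t : {s // loc s = ℓ} | f t = p} = #{t : {s // loc s = ℓ} | g t = p}) (p : P) :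
    #{s | f s = p} = #{s | g s = p} := by
  have hloc {A : Finset S} : Set.MapsTo loc A (univ.image loc) := fun s _ => by simp
  rw [card_eq_sum_card_fiberwise hloc, card_eq_sum_card_fiberwise hloc]
  refine sum_congr rfl fun ℓ _ => ?_
  rw [← card_filter_subtype_loc, ← card_filter_subtype_loc, h]

lemma feasible_of_forall_loc {cap : P → ℕ} {M₀ M : S → P} (hM₀ : Feasible loc cap M₀)
    (h : ∀ ℓ p, #{t : {s // loc s = ℓ} | M t = p} = #{t : {s // loc s = ℓ} | M₀ t = p}) :
    Feasible loc cap M := by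
  have hM₀_at : ∀ s, ∃ u, M₀ u = M s ∧ loc u = loc s := fun s => by
    have : ({t : {u // loc u = loc s} | M₀ t = M s} : Finset _).Nonempty := by
      rw [← card_pos, ← h]
      exact card_pos.2 ⟨⟨s, rfl⟩, by simp⟩
    obtain ⟨⟨u, hu⟩, hMu⟩ := this
    exact ⟨u, (mem_filter.1 hMu).2, hu⟩
  refine ⟨fun p => (card_fiber_eq_of_forall_loc loc h p).trans (hM₀.1 p), fun s t hst => ?_⟩
  obtain ⟨u, hu, hus⟩ := hM₀_at s
  obtain ⟨v, hv, hvt⟩ := hM₀_at t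
  rw [← hus, ← hvt]
  exact hM₀.2 u v (hu.trans (hst.trans hv.symm))

end Locations

/-- Every LRSM instance that admits a feasible matching admits an l-stable matching:
a feasible matching with no blocking pair `(s, p)` in which `s` is collocated with
the students matched to `p`. -/
theorem stmt4 {S P L : Type*} [Fintype S]
    (loc : S → L) (cap : P → ℕ) (sRank : S → P → ℕ) (pRank : P → S → ℕ)
    (hfeas : ∃ M, Feasible loc cap M) :
    ∃ M, Feasible loc cap M ∧
      ∀ s p, (∃ t, M t = p ∧ loc t = loc s) → ¬ BlockingPair sRank pRank M s p := by
  obtain ⟨M₀, hM₀⟩ := hfeas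
  choose F hF hstable using fun ℓ =>
    exists_stable_of_occupancy (fun (s : {s // loc s = ℓ}) => sRank s) (fun p s => pRank p s)
      (fun s => M₀ s)
  set M : S → P := fun s => F (loc s) ⟨s, rfl⟩
  have hMF : ∀ ℓ (t : {s // loc s = ℓ}), M t = F ℓ t := by
    rintro _ ⟨t, rfl⟩
    rfl
  have hM : Feasible loc cap M := feasible_of_forall_loc loc hM₀ fun ℓ p => by
    simpa only [hMF] using hF ℓ p
  refine ⟨M, hM, ?_⟩
  rintro s _ ⟨t, rfl, hts⟩ ⟨hlt, u, hu, hpref⟩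
  have hus : loc u = loc s := (hM.2 u t hu).trans hts
  exact hstable (loc s) ⟨s, rfl⟩ (M t) ⟨hlt, ⟨u, hus⟩, (hMF _ ⟨u, hus⟩).symm.trans hu, hpref⟩
end

section
/- Given an instance of 3-Partition with multiset A = {a_1,...,a_{3m}} summing to mT where T/4 < a_j < T/2 for all j, construct an LRSM instance with a project of capacity a_j for each j, and m locations each containing exactly T students. Then the 3-Partition instance has a solution if and only if the constructed LRSM instance has a feasible matching. -/
/-!
A feasible matching sends all students of a project to one location, so it induces a map `f`
from projects to locations whose fibres have total capacity `T`; conversely such an `f` is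
realised by filling each location's `T` students with the capacities of the projects assigned
to it. Since every capacity lies strictly between `T/4` and `T/2`, a fibre of total capacity
`T` has exactly three projects, so `f` is a 3-partition.
-/

open Finset
open scoped Classical

section
variable {S P L : Type*} [Fintype S] [DecidableEq P]

def IsFeasibleMatching (loc : S → L) (cap : P → ℕ) (M : S → P) : Prop :=
  (∀ p, #{s | M s = p} = cap p) ∧ ∀ s t, M s = M t → loc s = loc t

theorem sum_cap_fiber_eq_card_fiber [Fintype P] [DecidableEq L] {loc : S → L} {cap : P → ℕ}
    {M : S → P} (hcap : ∀ p, #{s | M s = p} = cap p) {f : P → L} (hf : ∀ s, f (M s) = loc s)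
    (l : L) :
    ∑ p with f p = l, cap p = #{s | loc s = l} := by
  rw [card_eq_sum_card_fiberwise (f := M) (t := {p | f p = l})]
  · refine sum_congr rfl fun p hp => ?_
    rw [← hcap p, filter_filter]
    congr 1
    ext s
    simp only [mem_filter, mem_univ, true_and] at hp ⊢
    exact ⟨fun h => ⟨by rw [← hf s, h, hp], h⟩, fun h => h.2⟩
  · intro s hs
    simp_all

theorem exists_comp_eq_of_isFeasibleMatching {loc : S → L} {cap : P → ℕ} {M : S → P}
    (hM : IsFeasibleMatching loc cap M) (hcap : ∀ p, 0 < cap p) :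
    ∃ f : P → L, ∀ s, f (M s) = loc s := by
  have hocc : ∀ p, ∃ s, M s = p := fun p => by
    obtain ⟨s, hs⟩ := card_pos.1 ((hM.1 p).symm ▸ hcap p)
    exact ⟨s, (mem_filter.1 hs).2⟩
  choose g hg using hocc
  exact ⟨fun p => loc (g p), fun s => hM.2 _ _ (hg (M s))⟩

theorem exists_isFeasibleMatching_of_sum_cap_fiber [Fintype P] [DecidableEq L] {loc : S → L}
    {cap : P → ℕ} {f : P → L} (h : ∀ l, ∑ p with f p = l, cap p = #{s | loc s = l}) :
    ∃ M : S → P, IsFeasibleMatching loc cap M := by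
  have hfib (l : L) :
      Fintype.card {s // loc s = l} = Fintype.card {x : Σ p, Fin (cap p) // f x.1 = l} := by
    rw [Fintype.card_congr (Equiv.subtypeSigmaEquiv (fun p => Fin (cap p)) (f · = l)),
      Fintype.card_sigma, Fintype.card_subtype, ← h l]
    simp only [Fintype.card_fin]
    exact sum_subtype _ (fun _ => by simp) cap
  -- students of location `l` are put in bijection with the capacity slots of `f⁻¹ l`
  let e : S ≃ Σ p, Fin (cap p) := Equiv.ofFiberEquiv fun l => Fintype.equivOfCardEq (hfib l)
  have he (s : S) : f (e s).1 = loc s :=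
    Equiv.ofFiberEquiv_map (g := fun x : Σ p, Fin (cap p) => f x.1) _ s
  refine ⟨fun s => (e s).1, fun p => ?_, fun s t hst => ?_⟩
  · rw [← Fintype.card_subtype,
      Fintype.card_congr (e.subtypeEquiv (q := (·.1 = p)) fun _ => Iff.rfl),
      Fintype.card_congr (Equiv.sigmaSubtype p), Fintype.card_fin]
  · rw [← he s, ← he t]
    exact congrArg f hst

end

theorem card_eq_three_of_sum_eq {ι : Type*} {s : Finset ι} {a : ι → ℕ} {T : ℕ} (hT : 0 < T)
    (hsum : ∑ j ∈ s, a j = T) (hbound : ∀ j ∈ s, T < 4 * a j ∧ 2 * a j < T) : #s = 3 := by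
  have hs : s.Nonempty := nonempty_of_sum_ne_zero (hsum ▸ hT.ne')
  have hlt : #s * T < 4 * T := by
    calc #s * T = ∑ j ∈ s, T := by rw [sum_const, smul_eq_mul]
      _ < ∑ j ∈ s, 4 * a j := sum_lt_sum_of_nonempty hs fun j hj => (hbound j hj).1
      _ = 4 * T := by rw [← mul_sum, hsum]
  have hgt : 2 * T < #s * T := by
    calc 2 * T = ∑ j ∈ s, 2 * a j := by rw [← mul_sum, hsum]
      _ < ∑ j ∈ s, T := sum_lt_sum_of_nonempty hs fun j hj => (hbound j hj).2
      _ = #s * T := by rw [sum_const, smul_eq_mul]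
  have := Nat.lt_of_mul_lt_mul_right hlt
  have := Nat.lt_of_mul_lt_mul_right hgt
  omega

theorem card_filter_fst_eq {α β : Type*} [Fintype α] [DecidableEq α] [Fintype β] (i : α) :
    #{s : α × β | s.1 = i} = Fintype.card β := by
  rw [← Fintype.card_subtype,
    Fintype.card_congr (Equiv.prodSubtypeFstEquivSubtypeProd (p := (· = i)))]
  simp

theorem stmt5_general (m T : ℕ) (a : Fin (3 * m) → ℕ)
    (hbound : ∀ j, T < 4 * a j ∧ 2 * a j < T) :
    (∃ f : Fin (3 * m) → Fin m,
        (∀ i, (Finset.univ.filter fun j => f j = i).card = 3) ∧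
        ∀ i, ∑ j ∈ Finset.univ.filter (fun j => f j = i), a j = T) ↔
      (∃ M : Fin m × Fin T → Fin (3 * m),
        (∀ p, (Finset.univ.filter fun s => M s = p).card = a p) ∧
        ∀ s t, M s = M t → s.1 = t.1) := by
  constructor
  · rintro ⟨f, -, hT⟩
    exact exists_isFeasibleMatching_of_sum_cap_fiber (loc := Prod.fst) (f := f) fun i => by
      rw [hT i, card_filter_fst_eq, Fintype.card_fin]
  · rintro ⟨M, hM⟩
    obtain ⟨f, hf⟩ := exists_comp_eq_of_isFeasibleMatching (loc := Prod.fst) hM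
      fun p => by have := hbound p; omega
    have hT (i : Fin m) : ∑ j with f j = i, a j = T := by
      rw [sum_cap_fiber_eq_card_fiber hM.1 hf, card_filter_fst_eq, Fintype.card_fin]
    have hTpos (i : Fin m) : 0 < T := Nat.zero_lt_of_lt (hbound ⟨0, by have := i.pos; omega⟩).2
    exact ⟨f, fun i => card_eq_three_of_sum_eq (hTpos i) (hT i) fun j _ => hbound j, hT⟩

/-- Given a 3-Partition instance `(m, a, T)` with `Σ a = m·T` and `T/4 < a_j < T/2`,
the LRSM instance with one project of capacity `a j` per element and `m` locations of
`T` students each (students are pairs `(location, index)`) has a feasible matching iff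
the 3-Partition instance has a solution. -/
theorem stmt5 (m T : ℕ) (a : Fin (3 * m) → ℕ)
    (hsum : ∑ j, a j = m * T)
    (hbound : ∀ j, T < 4 * a j ∧ 2 * a j < T) :
    (∃ f : Fin (3 * m) → Fin m,
        (∀ i, (Finset.univ.filter fun j => f j = i).card = 3) ∧
        ∀ i, ∑ j ∈ Finset.univ.filter (fun j => f j = i), a j = T) ↔
      (∃ M : Fin m × Fin T → Fin (3 * m),
        (∀ p, (Finset.univ.filter fun s => M s = p).card = a p) ∧
        ∀ s t, M s = M t → s.1 = t.1) :=
  stmt5_general m T a hbound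
end

section
/- In any feasible matching of the LRSM instance constructed from a 3-Partition instance with T/4 < a_j < T/2 for all j, each location is matched with exactly 3 projects (i.e., exactly 3 projects have all their students from that location), and the capacities of those 3 projects sum to T. -/
open Finset
open scoped Classical

/-- In any feasible matching of the LRSM instance constructed from a 3-Partition
instance with `T/4 < a_j < T/2`, each location is matched with exactly 3 projects,
and the capacities of those 3 projects sum to `T`. -/
theorem stmt6 (m T : ℕ) (a : Fin (3 * m) → ℕ)
    (hsum : ∑ j, a j = m * T)
    (hbound : ∀ j, T < 4 * a j ∧ 2 * a j < T)
    (M : Fin m × Fin T → Fin (3 * m))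
    (hfeas : (∀ p, (Finset.univ.filter fun s => M s = p).card = a p) ∧
        ∀ s t, M s = M t → s.1 = t.1) :
    ∀ l : Fin m,
      (Finset.univ.filter fun p : Fin (3 * m) => ∃ s, M s = p ∧ s.1 = l).card = 3 ∧
      ∑ p ∈ Finset.univ.filter (fun p : Fin (3 * m) => ∃ s, M s = p ∧ s.1 = l), a p = T := by
  obtain ⟨hcard, hcol⟩ := hfeas
  intro l
  have hm : 0 < m := l.pos
  have h3m : 0 < 3 * m := by omega
  have hT : 2 < T := by
    have h := hbound ⟨0, h3m⟩
    omega
  set S : Finset (Fin (3 * m)) :=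
    Finset.univ.filter (fun p : Fin (3 * m) => ∃ s, M s = p ∧ s.1 = l) with hS
  have hmem : ∀ p ∈ S, ∀ x, M x = p → x.1 = l := by
    intro p hp x hx
    obtain ⟨s, hs1, hs2⟩ := (Finset.mem_filter.mp hp).2
    rw [← hs2]
    exact hcol x s (hx.trans hs1.symm)
  -- sum of capacities over S equals T
  have hsumT : ∑ p ∈ S, a p = T := by
    have hloc : (Finset.univ.filter (fun x : Fin m × Fin T => x.1 = l)).card = T := by
      have : (Finset.univ.filter (fun x : Fin m × Fin T => x.1 = l))
          = {l} ×ˢ (Finset.univ : Finset (Fin T)) := by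
        ext x
        simp only [Finset.mem_filter, Finset.mem_univ, true_and, Finset.mem_product,
          Finset.mem_singleton]
        tauto
      rw [this]
      simp
    have hfib := Finset.card_eq_sum_card_fiberwise
      (f := M) (s := Finset.univ.filter (fun x : Fin m × Fin T => x.1 = l)) (t := S)
      (by
        intro x hx
        have hx1 : x.1 = l := (Finset.mem_filter.mp hx).2
        exact Finset.mem_filter.mpr ⟨Finset.mem_univ _, ⟨x, rfl, hx1⟩⟩)
    rw [hloc] at hfib
    rw [hfib]
    apply Finset.sum_congr rfl
    intro p hp
    have : ((Finset.univ.filter (fun x : Fin m × Fin T => x.1 = l)).filter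
        (fun x => M x = p)) = Finset.univ.filter (fun x => M x = p) := by
      ext x
      simp only [Finset.mem_filter, Finset.mem_univ, true_and]
      constructor
      · rintro ⟨_, h⟩; exact h
      · intro h; exact ⟨hmem p hp x h, h⟩
    rw [this, hcard p]
  -- cardinality of S is 3
  have hb1 : ∀ p ∈ S, T + 1 ≤ 4 * a p := by
    intro p _; have := (hbound p).1; omega
  have hb2 : ∀ p ∈ S, 2 * a p ≤ T - 1 := by
    intro p _; have := (hbound p).2; omega
  have h1 : S.card * (T + 1) ≤ 4 * T := by
    calc S.card * (T + 1) = ∑ _p ∈ S, (T + 1) := by rw [Finset.sum_const, smul_eq_mul]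
    _ ≤ ∑ p ∈ S, 4 * a p := Finset.sum_le_sum hb1
    _ = 4 * ∑ p ∈ S, a p := by rw [Finset.mul_sum]
    _ = 4 * T := by rw [hsumT]
  have h2 : 2 * T ≤ S.card * (T - 1) := by
    calc 2 * T = 2 * ∑ p ∈ S, a p := by rw [hsumT]
    _ = ∑ p ∈ S, 2 * a p := by rw [Finset.mul_sum]
    _ ≤ ∑ _p ∈ S, (T - 1) := Finset.sum_le_sum hb2
    _ = S.card * (T - 1) := by rw [Finset.sum_const, smul_eq_mul]
  have hle : S.card ≤ 3 := by
    by_contra h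
    push_neg at h
    have : 4 * (T + 1) ≤ S.card * (T + 1) := Nat.mul_le_mul_right _ (by omega)
    omega
  have hge : 3 ≤ S.card := by
    by_contra h
    push_neg at h
    have : S.card * (T - 1) ≤ 2 * (T - 1) := Nat.mul_le_mul_right _ (by omega)
    omega
  exact ⟨by omega, hsumT⟩
end

section
/- In the hardness-reduction instance I, any feasible matching with fewer than B_1 blocking pairs matches every local pair in X to a project in Y and matches no local pair to a project strictly to the right of the block [Y] in its preference list. -/
open Finset
open scoped Classical

/-- In the hardness-reduction instance, any feasible matching with fewer than `B₁`
blocking pairs matches every local pair in `X` to a project of `Y`, and matches no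
local pair to a project strictly to the right of the block `[Y]` in its preference
list (i.e. every student not matched in `Y` prefers its match to some project of `Y`). -/
theorem stmt9 {S P L : Type*} [Fintype S] [Fintype P] [Fintype L]
    (loc : S → L) (sRank : S → P → ℕ) (pRank : P → S → ℕ) (B₁ : ℕ)
    (X : Finset L) (Y : Finset P) (hX : X.card = B₁) (hY : Y.card = B₁)
    (pos : L → S) (hpos : ∀ l, loc (pos l) = l)
    (hloc2 : ∀ l : L, (Finset.univ.filter fun s => loc s = l).card = 2)
    (hsinj : ∀ s, Function.Injective (sRank s))
    (hpinj : ∀ p, Function.Injective (pRank p))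
    -- collocated students share a preference list (location master lists)
    (hml : ∀ s t, loc s = loc t → sRank s = sRank t)
    -- every project prefers every positive member of an X-pair to any other student
    (hproj : ∀ p : P, ∀ s t : S, (∃ l ∈ X, pos l = s) → (¬ ∃ l ∈ X, pos l = t) →
      pRank p s < pRank p t)
    -- every project prefers both members of any pair outside X⁻ to any student of X⁻
    (hneg : ∀ p : P, ∀ s t : S, ¬ (loc s ∈ X ∧ s ≠ pos (loc s)) →
      (loc t ∈ X ∧ t ≠ pos (loc t)) → pRank p s < pRank p t)
    -- positive members of X-pairs rank all of Y before everything else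
    (hXpref : ∀ l ∈ X, ∀ p ∈ Y, ∀ q ∉ Y, sRank (pos l) p < sRank (pos l) q)
    -- [Y] is a consecutive block in every student's preference list
    (hblock : ∀ s : S, ∀ q ∉ Y, (∃ p ∈ Y, sRank s p < sRank s q) →
      ∀ p ∈ Y, sRank s p < sRank s q)
    (M : S → P) (hM : Feasible loc (fun _ => 2) M)
    (hfew : (Finset.univ.filter fun sp : S × P =>
      BlockingPair sRank pRank M sp.1 sp.2).card < B₁) :
    (∀ s : S, loc s ∈ X → M s ∈ Y) ∧
    (∀ s : S, M s ∉ Y → ∃ p ∈ Y, sRank s (M s) < sRank s p) := by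
  classical
  obtain ⟨hcap, hcol⟩ := hM
  -- collocated students share their project
  have pairProj : ∀ s t : S, loc s = loc t → M s = M t := by
    intro s t hst
    have hsub : (univ.filter fun u => M u = M s) ⊆ (univ.filter fun u => loc u = loc s) := by
      intro u hu
      simp only [mem_filter, mem_univ, true_and] at hu ⊢
      exact hcol u s hu
    have heq : (univ.filter fun u => M u = M s) = (univ.filter fun u => loc u = loc s) := by
      apply Finset.eq_of_subset_of_card_le hsub
      rw [hcap (M s), hloc2 (loc s)]
    have ht : t ∈ univ.filter fun u => loc u = loc s := by simp [hst.symm]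
    rw [← heq] at ht
    simp only [mem_filter, mem_univ, true_and] at ht
    exact ht.symm
  -- a student blocking with all of Y contradicts hfew
  have blockAll : ∀ s₀ : S, (∀ p ∈ Y, BlockingPair sRank pRank M s₀ p) → False := by
    intro s₀ hall
    have hsub : Y.image (fun p => (s₀, p)) ⊆
        univ.filter (fun sp : S × P => BlockingPair sRank pRank M sp.1 sp.2) := by
      intro x hx
      simp only [mem_image] at hx
      obtain ⟨p, hp, rfl⟩ := hx
      simp only [mem_filter, mem_univ, true_and]
      exact hall p hp
    have hinj : Function.Injective (fun p : P => (s₀, p)) := by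
      intro a b h
      exact (Prod.ext_iff.mp h).2
    have hcard := Finset.card_le_card hsub
    rw [Finset.card_image_of_injective _ hinj, hY] at hcard
    omega
  -- the other occupant of a pair's project
  have otherOcc : ∀ l : L, ∃ t, M t = M (pos l) ∧ loc t = l ∧ t ≠ pos l := by
    intro l
    have h2 : 1 < (univ.filter fun s => loc s = l).card := by rw [hloc2]; norm_num
    obtain ⟨t, ht, hne⟩ := Finset.exists_mem_ne h2 (pos l)
    simp only [mem_filter, mem_univ, true_and] at ht
    exact ⟨t, pairProj t (pos l) (by rw [ht, hpos]), ht, hne⟩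
  -- each project has an occupant that is not a positive X-member
  have nonPos : ∀ p : P, ∃ t, M t = p ∧ ¬ ∃ l ∈ X, pos l = t := by
    intro p
    by_contra h
    push_neg at h
    have h2 : 1 < (univ.filter fun s => M s = p).card := by rw [hcap]; norm_num
    obtain ⟨u, hu, v, hv, huv⟩ := Finset.one_lt_card.mp h2
    simp only [mem_filter, mem_univ, true_and] at hu hv
    obtain ⟨lu, _, hlu⟩ := h u hu
    obtain ⟨lv, _, hlv⟩ := h v hv
    have hl : loc u = loc v := hcol u v (hu.trans hv.symm)
    rw [← hlu, ← hlv, hpos, hpos] at hl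
    exact huv (by rw [← hlu, ← hlv, hl])
  -- positive members of X-pairs are matched in Y
  have step1 : ∀ l ∈ X, M (pos l) ∈ Y := by
    intro l hl
    by_contra hout
    apply blockAll (pos l)
    intro p hp
    obtain ⟨t, htp, htpos⟩ := nonPos p
    exact ⟨hXpref l hl p hp (M (pos l)) hout, t, htp, hproj p (pos l) t ⟨l, hl, rfl⟩ htpos⟩
  have step1b : ∀ s : S, loc s ∈ X → M s ∈ Y := by
    intro s hs
    have h := pairProj s (pos (loc s)) (by rw [hpos])
    rw [h]
    exact step1 _ hs
  -- every project of Y hosts some X-pair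
  have step2 : ∀ p ∈ Y, ∃ l ∈ X, M (pos l) = p := by
    have hinj : Set.InjOn (fun l => M (pos l)) X := by
      intro a _ b _ hab
      have h : loc (pos a) = loc (pos b) := hcol _ _ hab
      rwa [hpos, hpos] at h
    have himg : X.image (fun l => M (pos l)) = Y := by
      apply Finset.eq_of_subset_of_card_le
      · intro p hp
        obtain ⟨l, hl, rfl⟩ := mem_image.mp hp
        exact step1 l hl
      · rw [Finset.card_image_of_injOn hinj, hX, hY]
    intro p hp
    rw [← himg] at hp
    obtain ⟨l, hl, hlp⟩ := mem_image.mp hp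
    exact ⟨l, hl, hlp⟩
  refine ⟨step1b, ?_⟩
  intro s hsY
  by_contra hno
  push_neg at hno
  have hlocs : loc s ∉ X := fun h => hsY (step1b s h)
  apply blockAll s
  intro p hp
  have hne : sRank s p ≠ sRank s (M s) := by
    intro h
    exact hsY (hsinj s h ▸ hp)
  have h1 : sRank s p < sRank s (M s) := lt_of_le_of_ne (hno p hp) hne
  obtain ⟨l, hl, hlp⟩ := step2 p hp
  obtain ⟨t, htM, htl, htne⟩ := otherOcc l
  refine ⟨h1, t, by rw [htM, hlp], ?_⟩
  apply hneg p s t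
  · exact fun h => hlocs h.1
  · constructor
    · rw [htl]; exact hl
    · rw [htl]; exact htne
end

section
/- In the hardness reduction for L2 Min-BP Divisible ML-LRSM, each edge gadget g_{i,j} admits exactly two perfect matchings of its local pairs G^{i,j} to its projects H^{i,j} that avoid prohibited pairs (the v_i-preferred and v_j-preferred matchings), and each of these two matchings contains exactly two blocking pairs internal to the gadget. -/
open Finset
open scoped Classical

/-- Local pairs (and, with the same index type, gadget projects) of an edge gadget:
`(false, a)` is `g_{0,a+1}` (resp. `h_{0,a+1}`), `(true, a)` is `g_{1,a+1}` (resp.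
`h_{1,a+1}`). -/
abbrev GadgetIdx (B₂ : ℕ) := Bool × ZMod B₂

/-- The first-choice gadget project of each local pair. -/
def firstChoice (B₂ : ℕ) : GadgetIdx B₂ → GadgetIdx B₂
  | (false, a) => (false, a)
  | (true, a) => if a = 0 then (false, 1) else (true, a)

/-- The third-choice gadget project of each local pair (the second choice is the
vertex project, which is outside the gadget). -/
def thirdChoice (B₂ : ℕ) : GadgetIdx B₂ → GadgetIdx B₂
  | (false, a) => if a = 0 then (true, 0) else (false, a + 1)
  | (true, a) => (true, a + 1)

/-- Rank of a gadget project in a local pair's preference list: first choice, then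
(after the vertex project, rank 1) the third choice; all later projects are at or
after `[Y]`, hence prohibited. -/
def gadgetSRank (B₂ : ℕ) (d p : GadgetIdx B₂) : ℕ :=
  if p = firstChoice B₂ d then 0 else if p = thirdChoice B₂ d then 2 else 3

/-- The position of each local pair in the gadget projects' master list `[G^{i,j}*]`:
`g_{1,1}` first, then the pairs sorted by `b` then `a` ascending. -/
def gadgetPRank (B₂ : ℕ) : GadgetIdx B₂ → ℕ
  | (false, a) => a.val + 1
  | (true, a) => if a = 0 then 0 else B₂ + a.val

namespace Stmt11Aux

variable {n : ℕ}

instance fact1 : Fact (1 < n + 2) := ⟨by omega⟩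

lemma first_false (a : ZMod (n + 2)) : firstChoice (n + 2) (false, a) = (false, a) := rfl
lemma first_true (a : ZMod (n + 2)) :
    firstChoice (n + 2) (true, a) = if a = 0 then ((false, 1) : GadgetIdx (n + 2)) else (true, a) := rfl
lemma third_false (a : ZMod (n + 2)) :
    thirdChoice (n + 2) (false, a) = if a = 0 then ((true, 0) : GadgetIdx (n + 2)) else (false, a + 1) := rfl
lemma third_true (a : ZMod (n + 2)) : thirdChoice (n + 2) (true, a) = (true, a + 1) := rfl

lemma pRank_false (a : ZMod (n + 2)) : gadgetPRank (n + 2) (false, a) = a.val + 1 := rfl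
lemma pRank_true (a : ZMod (n + 2)) :
    gadgetPRank (n + 2) (true, a) = if a = 0 then 0 else (n + 2) + a.val := rfl

lemma add_one_ne (a : ZMod (n + 2)) : a + 1 ≠ a := by
  intro h
  have h1 : (1 : ZMod (n + 2)) = 0 := by linear_combination h
  exact one_ne_zero h1

lemma third_ne_first (d : GadgetIdx (n + 2)) :
    thirdChoice (n + 2) d ≠ firstChoice (n + 2) d := by
  obtain ⟨b, a⟩ := d
  cases b
  · rw [first_false, third_false]
    split_ifs with h
    · exact fun hc => Bool.noConfusion (congrArg Prod.fst hc)
    · exact fun hc => add_one_ne a (congrArg Prod.snd hc)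
  · rw [first_true, third_true]
    split_ifs with h
    · exact fun hc => Bool.noConfusion (congrArg Prod.fst hc)
    · exact fun hc => add_one_ne a (congrArg Prod.snd hc)

lemma sRank_first (d : GadgetIdx (n + 2)) :
    gadgetSRank (n + 2) d (firstChoice (n + 2) d) = 0 := if_pos rfl

lemma sRank_third (d : GadgetIdx (n + 2)) :
    gadgetSRank (n + 2) d (thirdChoice (n + 2) d) = 2 := by
  rw [gadgetSRank, if_neg (third_ne_first d), if_pos rfl]

lemma eq_first_of_sRank_lt {d p : GadgetIdx (n + 2)} (h : gadgetSRank (n + 2) d p < 2) :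
    p = firstChoice (n + 2) d := by
  by_contra hp
  rw [gadgetSRank, if_neg hp] at h
  split_ifs at h <;> omega

lemma val_pos {a : ZMod (n + 2)} (ha : a ≠ 0) : 1 ≤ a.val := by
  rcases Nat.eq_zero_or_pos a.val with h | h
  · exact absurd ((ZMod.val_eq_zero a).mp h) ha
  · exact h

lemma val_sub_one {a : ZMod (n + 2)} (ha : a ≠ 0) : (a - 1).val = a.val - 1 := by
  have h1 : 1 ≤ a.val := val_pos ha
  have hlt : a.val - 1 < n + 2 := by have := ZMod.val_lt a; omega
  have he : a - 1 = ((a.val - 1 : ℕ) : ZMod (n + 2)) := by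
    rw [Nat.cast_sub h1, ZMod.natCast_zmod_val, Nat.cast_one]
  rw [he, ZMod.val_cast_of_lt hlt]

/-- The `v_i`-preferred matching. -/
def mA (n : ℕ) : GadgetIdx (n + 2) → GadgetIdx (n + 2) :=
  fun d => if d.1 then thirdChoice (n + 2) d else firstChoice (n + 2) d

/-- The `v_j`-preferred matching. -/
def mB (n : ℕ) : GadgetIdx (n + 2) → GadgetIdx (n + 2) :=
  fun d => if d.1 then firstChoice (n + 2) d else thirdChoice (n + 2) d

lemma mA_false (a : ZMod (n + 2)) : mA n (false, a) = (false, a) := rfl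
lemma mA_true (a : ZMod (n + 2)) : mA n (true, a) = (true, a + 1) := rfl
lemma mB_false (a : ZMod (n + 2)) :
    mB n (false, a) = if a = 0 then ((true, 0) : GadgetIdx (n + 2)) else (false, a + 1) := rfl
lemma mB_true (a : ZMod (n + 2)) :
    mB n (true, a) = if a = 0 then ((false, 1) : GadgetIdx (n + 2)) else (true, a) := rfl

lemma mA_ne_mB : mA n ≠ mB n := by
  intro h
  have h0 := congrFun h (false, 0)
  rw [mA_false, mB_false, if_pos rfl] at h0
  exact Bool.noConfusion (congrArg Prod.fst h0)

lemma mA_choice : ∀ d, mA n d = firstChoice (n + 2) d ∨ mA n d = thirdChoice (n + 2) d := by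
  rintro ⟨b, a⟩
  cases b
  · left; rfl
  · right; rfl

lemma mB_choice : ∀ d, mB n d = firstChoice (n + 2) d ∨ mB n d = thirdChoice (n + 2) d := by
  rintro ⟨b, a⟩
  cases b
  · right; rfl
  · left; rfl

lemma mA_bij : Function.Bijective (mA n) := by
  apply Function.bijective_iff_has_inverse.mpr
  refine ⟨fun d => if d.1 then (true, d.2 - 1) else d, ?_, ?_⟩
  · rintro ⟨b, a⟩
    cases b
    · rfl
    · show ((true, a + 1 - 1) : GadgetIdx (n + 2)) = (true, a)
      rw [add_sub_cancel_right]
  · rintro ⟨b, a⟩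
    cases b
    · rfl
    · show ((true, a - 1 + 1) : GadgetIdx (n + 2)) = (true, a)
      rw [sub_add_cancel]

lemma mB_bij : Function.Bijective (mB n) := by
  apply Function.bijective_iff_has_inverse.mpr
  refine ⟨fun d => if d.1 then (if d.2 = 0 then (false, 0) else (true, d.2))
    else (if d.2 = 1 then (true, 0) else (false, d.2 - 1)), ?_, ?_⟩
  · rintro ⟨b, a⟩
    cases b
    · by_cases ha : a = 0
      · subst ha
        rw [mB_false, if_pos rfl]
        show (if (0 : ZMod (n + 2)) = 0 then ((false, 0) : GadgetIdx (n + 2)) else (true, 0)) = (false, 0)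
        rw [if_pos rfl]
      · rw [mB_false, if_neg ha]
        have h1 : a + 1 ≠ 1 := fun h => ha (by linear_combination h)
        show (if a + 1 = 1 then ((true, 0) : GadgetIdx (n + 2)) else (false, a + 1 - 1)) = (false, a)
        rw [if_neg h1, add_sub_cancel_right]
    · by_cases ha : a = 0
      · subst ha
        rw [mB_true, if_pos rfl]
        show (if (1 : ZMod (n + 2)) = 1 then ((true, 0) : GadgetIdx (n + 2)) else (false, 1 - 1)) = (true, 0)
        rw [if_pos rfl]
      · rw [mB_true, if_neg ha]
        show (if a = 0 then ((false, 0) : GadgetIdx (n + 2)) else (true, a)) = (true, a)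
        rw [if_neg ha]
  · rintro ⟨b, a⟩
    cases b
    · by_cases ha : a = 1
      · subst ha
        show mB n (if (1 : ZMod (n + 2)) = 1 then (true, 0) else (false, 1 - 1)) = (false, 1)
        rw [if_pos rfl, mB_true, if_pos rfl]
      · show mB n (if a = 1 then (true, 0) else (false, a - 1)) = (false, a)
        have h1 : a - 1 ≠ 0 := fun h => ha (by linear_combination h)
        rw [if_neg ha, mB_false, if_neg h1, sub_add_cancel]
    · by_cases ha : a = 0
      · subst ha
        show mB n (if (0 : ZMod (n + 2)) = 0 then (false, 0) else (true, 0)) = (true, 0)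
        rw [if_pos rfl, mB_false, if_pos rfl]
      · show mB n (if a = 0 then (false, 0) else (true, a)) = (true, a)
        rw [if_neg ha, mB_true, if_neg ha]


lemma case1 (M : GadgetIdx (n + 2) → GadgetIdx (n + 2)) (hinj : Function.Injective M)
    (hch : ∀ d, M d = firstChoice (n + 2) d ∨ M d = thirdChoice (n + 2) d)
    (h0 : M (false, 0) = (false, 0)) : M = mA n := by
  have hfalse : ∀ a : ZMod (n + 2), M (false, a) = (false, a) := by
    have key : ∀ k : ℕ, ∀ a : ZMod (n + 2), a = -((k : ℕ) : ZMod (n + 2)) →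
        M (false, a) = (false, a) := by
      intro k
      induction k with
      | zero =>
        intro a hak
        have : a = 0 := by rw [hak]; simp
        rw [this]; exact h0
      | succ k ih =>
        intro a hak
        by_cases hz : a = 0
        · rw [hz]; exact h0
        · rcases hch (false, a) with h | h
          · rw [h, first_false]
          · exfalso
            rw [third_false, if_neg hz] at h
            have h1 : a + 1 = -((k : ℕ) : ZMod (n + 2)) := by
              rw [hak]; push_cast; ring
            have h2 := ih (a + 1) h1
            rw [h1, ← h1] at h
            have h3 := hinj (h.trans h2.symm)
            have h4 : a = a + 1 := congrArg Prod.snd h3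
            exact add_one_ne a h4.symm
    intro a
    exact key ((-a).val) a (by rw [ZMod.natCast_zmod_val, neg_neg])
  have h10 : M (true, 0) = (true, 1) := by
    rcases hch (true, 0) with h | h
    · exfalso
      rw [first_true, if_pos rfl] at h
      have := hinj (h.trans (hfalse 1).symm)
      exact Bool.noConfusion (congrArg Prod.fst this)
    · rw [h, third_true, zero_add]
  have htrue : ∀ a : ZMod (n + 2), M (true, a) = (true, a + 1) := by
    have key : ∀ k : ℕ, ∀ a : ZMod (n + 2), a = ((k : ℕ) : ZMod (n + 2)) →
        M (true, a) = (true, a + 1) := by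
      intro k
      induction k with
      | zero =>
        intro a hak
        have : a = 0 := by rw [hak]; simp
        rw [this, zero_add]; exact h10
      | succ k ih =>
        intro a hak
        by_cases hz : a = 0
        · rw [hz, zero_add]; exact h10
        · rcases hch (true, a) with h | h
          · exfalso
            rw [first_true, if_neg hz] at h
            have h1 : a - 1 = ((k : ℕ) : ZMod (n + 2)) := by
              rw [hak]; push_cast; ring
            have h2 := ih (a - 1) h1
            rw [sub_add_cancel] at h2
            have h3 := hinj (h.trans h2.symm)
            have h4 : a = a - 1 := congrArg Prod.snd h3
            have h5 : (1 : ZMod (n + 2)) = 0 := by linear_combination h4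
            exact one_ne_zero h5
          · rw [h, third_true]
    intro a
    exact key a.val a (by rw [ZMod.natCast_zmod_val])
  funext d
  obtain ⟨b, a⟩ := d
  cases b
  · rw [hfalse, mA_false]
  · rw [htrue, mA_true]

lemma case2 (M : GadgetIdx (n + 2) → GadgetIdx (n + 2)) (hinj : Function.Injective M)
    (hch : ∀ d, M d = firstChoice (n + 2) d ∨ M d = thirdChoice (n + 2) d)
    (h0 : M (false, 0) = (true, 0)) : M = mB n := by
  have htrue : ∀ a : ZMod (n + 2), a ≠ 0 → M (true, a) = (true, a) := by
    have key : ∀ k : ℕ, ∀ a : ZMod (n + 2), a ≠ 0 → a = -(((k + 1 : ℕ)) : ZMod (n + 2)) →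
        M (true, a) = (true, a) := by
      intro k
      induction k with
      | zero =>
        intro a ha hak
        rcases hch (true, a) with h | h
        · rw [h, first_true, if_neg ha]
        · exfalso
          rw [third_true] at h
          have h1 : a + 1 = 0 := by rw [hak]; push_cast; ring
          rw [h1] at h
          have := hinj (h.trans h0.symm)
          exact Bool.noConfusion (congrArg Prod.fst this)
      | succ k ih =>
        intro a ha hak
        rcases hch (true, a) with h | h
        · rw [h, first_true, if_neg ha]
        · exfalso
          rw [third_true] at h
          by_cases hz : a + 1 = 0
          · rw [hz] at h
            have := hinj (h.trans h0.symm)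
            exact Bool.noConfusion (congrArg Prod.fst this)
          · have h1 : a + 1 = -(((k + 1 : ℕ)) : ZMod (n + 2)) := by
              rw [hak]; push_cast; ring
            have h2 := ih (a + 1) hz h1
            have h3 := hinj (h.trans h2.symm)
            have h4 : a = a + 1 := congrArg Prod.snd h3
            exact add_one_ne a h4.symm
    intro a ha
    have hna : (-a) ≠ 0 := neg_ne_zero.mpr ha
    have h1 : 1 ≤ (-a).val := val_pos hna
    refine key ((-a).val - 1) a ha ?_
    have h2 : (-a).val - 1 + 1 = (-a).val := by omega
    rw [h2, ZMod.natCast_zmod_val, neg_neg]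
  have ht0 : M (true, 0) = (false, 1) := by
    rcases hch (true, 0) with h | h
    · rw [h, first_true, if_pos rfl]
    · exfalso
      rw [third_true, zero_add] at h
      have h2 := htrue 1 one_ne_zero
      have h3 := hinj (h.trans h2.symm)
      have h4 : (0 : ZMod (n + 2)) = 1 := congrArg Prod.snd h3
      exact one_ne_zero h4.symm
  have hfalse : ∀ a : ZMod (n + 2), a ≠ 0 → M (false, a) = (false, a + 1) := by
    have key : ∀ k : ℕ, ∀ a : ZMod (n + 2), a ≠ 0 → a = (((k + 1 : ℕ)) : ZMod (n + 2)) →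
        M (false, a) = (false, a + 1) := by
      intro k
      induction k with
      | zero =>
        intro a ha hak
        rcases hch (false, a) with h | h
        · exfalso
          rw [first_false] at h
          have h1 : a = 1 := by rw [hak]; push_cast; ring
          rw [h1] at h
          have := hinj (h.trans ht0.symm)
          exact Bool.noConfusion (congrArg Prod.fst this)
        · rw [h, third_false, if_neg ha]
      | succ k ih =>
        intro a ha hak
        rcases hch (false, a) with h | h
        · exfalso
          rw [first_false] at h
          by_cases hz : (((k + 1 : ℕ)) : ZMod (n + 2)) = 0
          · have h1 : a = 1 := by
              rw [hak]; push_cast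
              push_cast at hz
              linear_combination hz
            rw [h1] at h
            have := hinj (h.trans ht0.symm)
            exact Bool.noConfusion (congrArg Prod.fst this)
          · have h2 := ih (((k + 1 : ℕ)) : ZMod (n + 2)) hz rfl
            have h3 : (((k + 1 : ℕ)) : ZMod (n + 2)) + 1 = a := by
              rw [hak]; push_cast; ring
            rw [h3] at h2
            have h4 := hinj (h.trans h2.symm)
            have h5 : a = (((k + 1 : ℕ)) : ZMod (n + 2)) := congrArg Prod.snd h4
            have h6 : (1 : ZMod (n + 2)) = 0 := by
              rw [h5] at hak
              push_cast at hak
              linear_combination -hak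
            exact one_ne_zero h6
        · rw [h, third_false, if_neg ha]
    intro a ha
    have h1 : 1 ≤ a.val := val_pos ha
    refine key (a.val - 1) a ha ?_
    have h2 : a.val - 1 + 1 = a.val := by omega
    rw [h2, ZMod.natCast_zmod_val]
  funext d
  obtain ⟨b, a⟩ := d
  cases b
  · by_cases ha : a = 0
    · rw [ha, h0, mB_false, if_pos rfl]
    · rw [hfalse a ha, mB_false, if_neg ha]
  · by_cases ha : a = 0
    · rw [ha, ht0, mB_true, if_pos rfl]
    · rw [htrue a ha, mB_true, if_neg ha]

lemma uniq (M : GadgetIdx (n + 2) → GadgetIdx (n + 2)) (hbij : Function.Bijective M)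
    (hch : ∀ d, M d = firstChoice (n + 2) d ∨ M d = thirdChoice (n + 2) d) :
    M = mA n ∨ M = mB n := by
  rcases hch (false, 0) with h | h
  · left
    exact case1 M hbij.injective hch (by rwa [first_false] at h)
  · right
    exact case2 M hbij.injective hch (by rwa [third_false, if_pos rfl] at h)


lemma card_two_of (P : ((GadgetIdx (n + 2) × Bool) × GadgetIdx (n + 2)) → Prop)
    [DecidablePred P]
    (d₀ p₀ : GadgetIdx (n + 2)) (h : ∀ x, P x ↔ x.1.1 = d₀ ∧ x.2 = p₀) :
    (Finset.univ.filter P).card = 2 := by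
  have he : Finset.univ.filter P = {((d₀, false), p₀), ((d₀, true), p₀)} := by
    ext ⟨⟨d, b⟩, p⟩
    simp only [Finset.mem_filter, Finset.mem_univ, true_and, Finset.mem_insert,
      Finset.mem_singleton, h, Prod.mk.injEq]
    cases b <;> simp
  rw [he, Finset.card_insert_of_notMem (by simp), Finset.card_singleton]

lemma countA_iff (x : (GadgetIdx (n + 2) × Bool) × GadgetIdx (n + 2)) :
    (gadgetSRank (n + 2) x.1.1 x.2 < gadgetSRank (n + 2) x.1.1 (mA n x.1.1) ∧
      ∃ d', mA n d' = x.2 ∧ gadgetPRank (n + 2) x.1.1 < gadgetPRank (n + 2) d') ↔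
    (x.1.1 = ((true, 0) : GadgetIdx (n + 2)) ∧ x.2 = ((false, 1) : GadgetIdx (n + 2))) := by
  obtain ⟨⟨⟨db, da⟩, b⟩, p⟩ := x
  constructor
  · rintro ⟨hlt, ⟨d'b, d'a⟩, hd', hpr⟩
    cases db
    · rw [show gadgetSRank (n + 2) ((false, da) : GadgetIdx (n + 2)) (mA n (false, da)) = 0
        from sRank_first _] at hlt
      omega
    · rw [show gadgetSRank (n + 2) ((true, da) : GadgetIdx (n + 2)) (mA n (true, da)) = 2
        from sRank_third _] at hlt
      have hp : p = firstChoice (n + 2) (true, da) := eq_first_of_sRank_lt hlt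
      by_cases h0 : da = 0
      · subst h0
        rw [first_true, if_pos rfl] at hp
        exact ⟨rfl, hp⟩
      · exfalso
        rw [first_true, if_neg h0] at hp
        subst hp
        cases d'b
        · rw [mA_false] at hd'
          exact Bool.noConfusion (congrArg Prod.fst hd')
        · rw [mA_true] at hd'
          have hda : d'a + 1 = da := congrArg Prod.snd hd'
          have hd'a : d'a = da - 1 := by linear_combination hda
          rw [pRank_true, pRank_true, if_neg h0] at hpr
          by_cases h1 : d'a = 0
          · rw [if_pos h1] at hpr; omega
          · rw [if_neg h1] at hpr
            have hv : d'a.val = da.val - 1 := by rw [hd'a, val_sub_one h0]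
            omega
  · rintro ⟨h1, h2⟩
    have hb : db = true := congrArg Prod.fst h1
    have ha : da = 0 := congrArg Prod.snd h1
    subst hb; subst ha; subst h2
    constructor
    · rw [show gadgetSRank (n + 2) ((true, 0) : GadgetIdx (n + 2)) (mA n (true, 0)) = 2
        from sRank_third _]
      rw [show ((false, 1) : GadgetIdx (n + 2)) = firstChoice (n + 2) (true, 0)
        from (by rw [first_true, if_pos rfl])]
      rw [sRank_first]
      omega
    · refine ⟨(false, 1), mA_false 1, ?_⟩
      rw [pRank_true, if_pos rfl, pRank_false, ZMod.val_one]
      omega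

lemma countB_iff (x : (GadgetIdx (n + 2) × Bool) × GadgetIdx (n + 2)) :
    (gadgetSRank (n + 2) x.1.1 x.2 < gadgetSRank (n + 2) x.1.1 (mB n x.1.1) ∧
      ∃ d', mB n d' = x.2 ∧ gadgetPRank (n + 2) x.1.1 < gadgetPRank (n + 2) d') ↔
    (x.1.1 = ((false, 0) : GadgetIdx (n + 2)) ∧ x.2 = ((false, 0) : GadgetIdx (n + 2))) := by
  obtain ⟨⟨⟨db, da⟩, b⟩, p⟩ := x
  constructor
  · rintro ⟨hlt, ⟨d'b, d'a⟩, hd', hpr⟩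
    cases db
    swap
    · rw [show gadgetSRank (n + 2) ((true, da) : GadgetIdx (n + 2)) (mB n (true, da)) = 0
        from sRank_first _] at hlt
      omega
    · rw [show gadgetSRank (n + 2) ((false, da) : GadgetIdx (n + 2)) (mB n (false, da)) = 2
        from sRank_third _] at hlt
      have hp : p = firstChoice (n + 2) (false, da) := eq_first_of_sRank_lt hlt
      rw [first_false] at hp
      subst hp
      by_cases h0 : da = 0
      · exact ⟨by rw [h0], by rw [h0]⟩
      · exfalso
        cases d'b
        · rw [mB_false] at hd'
          by_cases h1 : d'a = 0
          · rw [if_pos h1] at hd'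
            exact Bool.noConfusion (congrArg Prod.fst hd')
          · rw [if_neg h1] at hd'
            have hda : d'a + 1 = da := congrArg Prod.snd hd'
            have hd'a : d'a = da - 1 := by linear_combination hda
            rw [pRank_false, pRank_false] at hpr
            have hv : d'a.val = da.val - 1 := by rw [hd'a, val_sub_one h0]
            have h2 : 1 ≤ da.val := val_pos h0
            omega
        · rw [mB_true] at hd'
          by_cases h1 : d'a = 0
          · rw [if_pos h1] at hd'
            have hda1 : da = 1 := (congrArg Prod.snd hd').symm
            rw [pRank_false, pRank_true, if_pos h1] at hpr
            omega
          · rw [if_neg h1] at hd'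
            exact Bool.noConfusion (congrArg Prod.fst hd')
  · rintro ⟨h1, h2⟩
    have hb : db = false := congrArg Prod.fst h1
    have ha : da = 0 := congrArg Prod.snd h1
    subst hb; subst ha; subst h2
    constructor
    · show gadgetSRank (n + 2) ((false, 0) : GadgetIdx (n + 2)) ((false, 0) : GadgetIdx (n + 2)) <
        gadgetSRank (n + 2) ((false, 0) : GadgetIdx (n + 2)) (mB n (false, 0))
      have e1 : gadgetSRank (n + 2) ((false, 0) : GadgetIdx (n + 2))
          ((false, 0) : GadgetIdx (n + 2)) = 0 := sRank_first _
      have e2 : gadgetSRank (n + 2) ((false, 0) : GadgetIdx (n + 2)) (mB n (false, 0)) = 2 :=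
        sRank_third _
      rw [e1, e2]
      omega
    · refine ⟨(false, -1), ?_, ?_⟩
      · rw [mB_false, if_neg (neg_ne_zero.mpr one_ne_zero)]
        rw [show (-1 + 1 : ZMod (n + 2)) = 0 from by ring]
      · rw [pRank_false, pRank_false, ZMod.val_zero]
        rw [show ((-1 : ZMod (n + 2))).val = n + 1 from ZMod.val_neg_one (n + 1)]
        omega

end Stmt11Aux

/-- Each edge gadget (here with `B₂ = n + 2 ≥ 2`) admits exactly two perfect matchings
of its local pairs to its projects avoiding prohibited pairs (everyone matched to a
first or third choice), and each contains exactly two blocking pairs internal to the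
gadget (students are pair members, i.e. a local pair together with a `Bool` sign). -/
theorem stmt11 (n : ℕ) :
    ∃ MA MB : GadgetIdx (n + 2) → GadgetIdx (n + 2), MA ≠ MB ∧
      (Function.Bijective MA ∧
        ∀ d, MA d = firstChoice (n + 2) d ∨ MA d = thirdChoice (n + 2) d) ∧
      (Function.Bijective MB ∧
        ∀ d, MB d = firstChoice (n + 2) d ∨ MB d = thirdChoice (n + 2) d) ∧
      (∀ M : GadgetIdx (n + 2) → GadgetIdx (n + 2), Function.Bijective M →
        (∀ d, M d = firstChoice (n + 2) d ∨ M d = thirdChoice (n + 2) d) →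
        M = MA ∨ M = MB) ∧
      (∀ M ∈ [MA, MB],
        (Finset.univ.filter fun x : (GadgetIdx (n + 2) × Bool) × GadgetIdx (n + 2) =>
          gadgetSRank (n + 2) x.1.1 x.2 < gadgetSRank (n + 2) x.1.1 (M x.1.1) ∧
          ∃ d', M d' = x.2 ∧
            gadgetPRank (n + 2) x.1.1 < gadgetPRank (n + 2) d').card = 2) := by
  refine ⟨Stmt11Aux.mA n, Stmt11Aux.mB n, Stmt11Aux.mA_ne_mB,
    ⟨Stmt11Aux.mA_bij, Stmt11Aux.mA_choice⟩, ⟨Stmt11Aux.mB_bij, Stmt11Aux.mB_choice⟩,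
    Stmt11Aux.uniq, ?_⟩
  intro M hM
  rcases List.mem_pair.mp hM with rfl | rfl
  · exact Stmt11Aux.card_two_of (n := n) _ (true, 0) (false, 1) Stmt11Aux.countA_iff
  · exact Stmt11Aux.card_two_of (n := n) _ (false, 0) (false, 0) Stmt11Aux.countB_iff
end
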